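/- arXiv:1710.08593 — 9 statements merged into one kernel-verified Lean document; each statement's English description precedes it below -/
import Mathlib

section
/- Fix n ∈ ℕ, complex numbers a_1, ..., a_n and c ∈ ℂ. Define the nonlinear operator 𝔇_n(u) = [D − a_n u]⋯[D − a_2 u][D − a_1 u](u), where [D − a u](v) = v' − a·u·v. Then for the function u(z) = c/z (z ≠ 0) one has 𝔇_n(u)(z) = (−1)^n · c · ∏_{k=1}^n (k + a_k c) · z^{−(n+1)}. In particular, 𝔇_n(u) vanishes identically on ℂ∖{0} if and only if c ∈ {0, −1/a_1, −2/a_2, ..., −n/a_n} (interpreting −k/a_k as absent when a_k = 0). -/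
/-- The nonlinear operator `𝔇_n(u) = [D - a_n u] ⋯ [D - a_1 u] (u)`, where
`[D - a·u](v) = v' - a·u·v`; here `a k` denotes `a_{k+1}`. -/
noncomputable def frakD (a : ℕ → ℂ) (u : ℂ → ℂ) : ℕ → (ℂ → ℂ)
  | 0 => u
  | k + 1 => fun z => deriv (frakD a u k) z - a k * u z * frakD a u k z

/-!
Each factor `[D - a_{k+1} u]` maps a monomial `C z^{-(k+1)}` to
`-(k+1) C z^{-(k+2)} - a_{k+1} c C z^{-(k+2)} = -(k+1 + a_{k+1} c) C z^{-(k+2)}`,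
so induction on `n` gives the closed form; evaluating it at `z = 1` shows that the
coefficient itself must vanish.
-/

theorem hasDerivAt_const_div_pow {𝕜 : Type*} [NontriviallyNormedField 𝕜] (C : 𝕜) (m : ℕ)
    {z : 𝕜} (hz : z ≠ 0) :
    HasDerivAt (fun w => C / w ^ m) (-(m * C) / z ^ (m + 1)) z := by
  have h := (hasDerivAt_zpow (-(m : ℤ)) z (Or.inl hz)).const_mul C
  simp only [zpow_neg, zpow_natCast, ← div_eq_mul_inv] at h
  refine h.congr_deriv ?_
  rw [show -(m : ℤ) - 1 = -((m + 1 : ℕ) : ℤ) by push_cast; ring, zpow_neg, zpow_natCast]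
  push_cast
  ring

theorem frakD_const_div_apply (a : ℕ → ℂ) (c : ℂ) (n : ℕ) {z : ℂ} (hz : z ≠ 0) :
    frakD a (fun w => c / w) n z
      = (-1) ^ n * c * (∏ k ∈ Finset.range n, (((k : ℂ) + 1) + a k * c)) / z ^ (n + 1) := by
  induction n generalizing z with
  | zero => simp [frakD]
  | succ n ih =>
    set C := (-1) ^ n * c * ∏ k ∈ Finset.range n, (((k : ℂ) + 1) + a k * c)
    have hloc : frakD a (fun w => c / w) n =ᶠ[nhds z] fun w => C / w ^ (n + 1) :=
      (eventually_ne_nhds hz).mono fun w hw => ih hw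
    have hderiv : deriv (frakD a (fun w => c / w) n) z = -((n + 1 : ℕ) * C) / z ^ (n + 1 + 1) :=
      hloc.deriv_eq.trans (hasDerivAt_const_div_pow C (n + 1) hz).deriv
    change deriv (frakD a (fun w => c / w) n) z - a n * (c / z) * frakD a (fun w => c / w) n z = _
    rw [hderiv, ih hz, Finset.prod_range_succ]
    simp only [C]
    push_cast
    field_simp
    ring

/-- for `u(z) = c / z`, `𝔇_n(u)(z) = (-1)^n c ∏_{k=1}^n (k + a_k c) z^{-(n+1)}`,
and `𝔇_n(u)` vanishes identically on `ℂ ∖ {0}` iff `c = 0` or `c = -k/a_k` for some `k`. -/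
theorem stmt_2 (n : ℕ) (a : ℕ → ℂ) (c : ℂ) :
    (∀ z : ℂ, z ≠ 0 →
      frakD a (fun w => c / w) n z
        = (-1) ^ n * c * (∏ k ∈ Finset.range n, (((k : ℂ) + 1) + a k * c)) / z ^ (n + 1)) ∧
    ((∀ z : ℂ, z ≠ 0 → frakD a (fun w => c / w) n z = 0) ↔
      (c = 0 ∨ ∃ k ∈ Finset.range n, ((k : ℂ) + 1) + a k * c = 0)) := by
  have closed_form := fun z (hz : z ≠ 0) => frakD_const_div_apply a c n hz
  refine ⟨closed_form, ?_⟩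
  have coeff_eq_zero_iff :
      (-1) ^ n * c * (∏ k ∈ Finset.range n, (((k : ℂ) + 1) + a k * c)) = 0 ↔
        c = 0 ∨ ∃ k ∈ Finset.range n, ((k : ℂ) + 1) + a k * c = 0 := by
    simp [Finset.prod_eq_zero_iff]
  constructor
  · intro h
    simpa [closed_form 1 one_ne_zero, coeff_eq_zero_iff] using h 1 one_ne_zero
  · intro h z hz
    rw [closed_form z hz, coeff_eq_zero_iff.mpr h, zero_div]
end

section
/- Let a_1, b_1, α, c ∈ ℂ with α a_1 + b_1 ≠ 0. Then the function u(z) = −(α + b_1 c e^{(α a_1 + b_1)z}) / (a_1 c e^{(α a_1 + b_1)z} − 1) satisfies the Riccati equation u'(z) = (a_1 u(z) + b_1)(u(z) − α) at every point z where the denominator a_1 c e^{(α a_1 + b_1)z} − 1 is nonzero. -/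
/-! If `E' = k E` with `k = α a₁ + b₁`, then for `u = -(α + b₁ E) / (a₁ E - 1)` both factors of
the Riccati right-hand side are simple: `a₁ u + b₁ = -k / (a₁ E - 1)` and
`u - α = -k E / (a₁ E - 1)`, and their product `k² E / (a₁ E - 1)²` is exactly what the quotient
rule gives for `u'`. -/

section Mobius

variable {𝕜 : Type*} [Field 𝕜] {a1 b1 α e : 𝕜}

theorem mul_mobius_add_eq (he : a1 * e - 1 ≠ 0) :
    a1 * (-(α + b1 * e) / (a1 * e - 1)) + b1 = -(α * a1 + b1) / (a1 * e - 1) := by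
  field_simp
  ring

theorem mobius_sub_eq (he : a1 * e - 1 ≠ 0) :
    -(α + b1 * e) / (a1 * e - 1) - α = -((α * a1 + b1) * e) / (a1 * e - 1) := by
  rw [eq_div_iff he, sub_mul, div_mul_cancel₀ _ he]
  ring

end Mobius

theorem hasDerivAt_mobius_riccati {𝕜 : Type*} [NontriviallyNormedField 𝕜] {E : 𝕜 → 𝕜}
    {a1 b1 α z : 𝕜} (hE : HasDerivAt E ((α * a1 + b1) * E z) z) (hz : a1 * E z - 1 ≠ 0) :
    HasDerivAt (fun w => -(α + b1 * E w) / (a1 * E w - 1))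
      ((a1 * (-(α + b1 * E z) / (a1 * E z - 1)) + b1) *
        (-(α + b1 * E z) / (a1 * E z - 1) - α)) z := by
  refine (((hE.const_mul b1).const_add α).neg.div ((hE.const_mul a1).sub_const 1) hz).congr_deriv
    ?_
  rw [mul_mobius_add_eq hz, mobius_sub_eq hz, Pi.neg_apply]
  field_simp
  ring

theorem stmt_3_general (a1 b1 α c : ℂ) (u : ℂ → ℂ)
    (hu : u = fun z => -(α + b1 * c * Complex.exp ((α * a1 + b1) * z)) /
      (a1 * c * Complex.exp ((α * a1 + b1) * z) - 1)) :
    ∀ z : ℂ, a1 * c * Complex.exp ((α * a1 + b1) * z) - 1 ≠ 0 →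
      deriv u z = (a1 * u z + b1) * (u z - α) := by
  intro z hz
  set E : ℂ → ℂ := fun w => c * Complex.exp ((α * a1 + b1) * w)
  have hE : HasDerivAt E ((α * a1 + b1) * E z) z := by
    simpa [E, mul_comm, mul_left_comm] using
      (((hasDerivAt_id z).const_mul (α * a1 + b1)).cexp).const_mul c
  have hu' : u = fun w => -(α + b1 * E w) / (a1 * E w - 1) := by
    simp only [hu, E, mul_assoc]
  rw [hu']
  exact (hasDerivAt_mobius_riccati hE (by simpa only [E, mul_assoc] using hz)).deriv

/-- the explicit function solves the Riccati equation
`u' = (a₁ u + b₁)(u - α)` wherever the denominator is nonzero. -/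
theorem stmt_3 (a1 b1 α c : ℂ) (h : α * a1 + b1 ≠ 0) (u : ℂ → ℂ)
    (hu : u = fun z => -(α + b1 * c * Complex.exp ((α * a1 + b1) * z)) /
      (a1 * c * Complex.exp ((α * a1 + b1) * z) - 1)) :
    ∀ z : ℂ, a1 * c * Complex.exp ((α * a1 + b1) * z) - 1 ≠ 0 →
      deriv u z = (a1 * u z + b1) * (u z - α) :=
  stmt_3_general a1 b1 α c u hu
end

section
/- Let a ∈ ℂ, a ≠ 0, and c_0, c_1 ∈ ℂ. The function w(z) = −1/(2a(z − c_0)) − 1/(2a(z − c_1)) satisfies w''(z) − 6a·w(z)·w'(z) + 4a²·w(z)³ = 0 for all z ∈ ℂ ∖ {c_0, c_1}. -/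
/-!
Writing `k = (2a)⁻¹`, `u = (z - c₀)⁻¹`, `v = (z - c₁)⁻¹`, one has `w = -k (u + v)`,
`w' = k (u² + v²)` and `w'' = -2k (u³ + v³)`. Substituting, the left-hand side becomes a
polynomial in `u, v, k, a` that vanishes modulo `k · 2a · k = k`, an identity that holds in
any group with zero.
-/

open Filter Topology

section

variable {𝕜 F : Type*} [NontriviallyNormedField 𝕜] [NormedAddCommGroup F] [NormedSpace 𝕜 F]

theorem hasDerivAt_sub_zpow (m : ℤ) {c z : 𝕜} (hz : z ≠ c) :
    HasDerivAt (fun x => (x - c) ^ m) (m * (z - c) ^ (m - 1)) z :=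
  (hasDerivAt_zpow m (z - c) (.inl (sub_ne_zero.2 hz))).comp_sub_const z c

theorem deriv_deriv_eq_of_eventually_hasDerivAt {f f' : 𝕜 → F} {f'' : F} {z : 𝕜}
    (hf : ∀ᶠ x in 𝓝 z, HasDerivAt f (f' x) x) (hf' : HasDerivAt f' f'' z) :
    deriv (deriv f) z = f'' := by
  have hderiv : deriv f =ᶠ[𝓝 z] f' := hf.mono fun x hx => hx.deriv
  rw [hderiv.deriv_eq, hf'.deriv]

end

theorem stmt_6_general (a c0 c1 : ℂ) (w : ℂ → ℂ)
    (hw : w = fun z => -(1 / (2 * a * (z - c0))) - 1 / (2 * a * (z - c1))) :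
    ∀ z : ℂ, z ≠ c0 → z ≠ c1 →
      deriv (deriv w) z - 6 * a * w z * deriv w z + 4 * a ^ 2 * (w z) ^ 3 = 0 := by
  intro z hz0 hz1
  obtain ⟨k, hk⟩ : ∃ k : ℂ, k = (2 * a)⁻¹ := ⟨_, rfl⟩
  have hw' : w = fun x => -k * ((x - c0) ^ (-1 : ℤ) + (x - c1) ^ (-1 : ℤ)) := by
    rw [hw]; funext x; simp only [zpow_neg_one, one_div, mul_inv, hk]; ring
  have hw1 : ∀ x, x ≠ c0 → x ≠ c1 →
      HasDerivAt w (k * ((x - c0) ^ (-2 : ℤ) + (x - c1) ^ (-2 : ℤ))) x := by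
    intro x hx0 hx1
    rw [hw']
    exact (((hasDerivAt_sub_zpow (-1) hx0).fun_add (hasDerivAt_sub_zpow (-1) hx1)).const_mul
      (-k)).congr_deriv (by norm_num; ring)
  have hw2 : HasDerivAt (fun x => k * ((x - c0) ^ (-2 : ℤ) + (x - c1) ^ (-2 : ℤ)))
      (k * (-2 * (z - c0) ^ (-3 : ℤ) + -2 * (z - c1) ^ (-3 : ℤ))) z :=
    (((hasDerivAt_sub_zpow (-2) hz0).fun_add (hasDerivAt_sub_zpow (-2) hz1)).const_mul
      k).congr_deriv (by norm_num)
  have hk2 : k * (2 * a) * k = k := by simpa [hk] using mul_inv_mul_cancel k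
  rw [deriv_deriv_eq_of_eventually_hasDerivAt
      (((eventually_ne_nhds hz0).and (eventually_ne_nhds hz1)).mono fun x hx => hw1 x hx.1 hx.2)
      hw2, (hw1 z hz0 hz1).deriv, hw']
  simp only [zpow_neg, zpow_ofNat, ← inv_pow]
  generalize (z - c0)⁻¹ = u
  generalize (z - c1)⁻¹ = v
  linear_combination (3 * (u ^ 3 + v ^ 3 + u * v * (u + v))
    - (u ^ 3 + v ^ 3 + 3 * u * v * (u + v)) * (2 * a * k + 1)) * hk2

/-- `w(z) = -1/(2a(z-c₀)) - 1/(2a(z-c₁))` solves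
`w'' - 6 a w w' + 4 a² w³ = 0` on `ℂ ∖ {c₀, c₁}`. -/
theorem stmt_6 (a c0 c1 : ℂ) (ha : a ≠ 0) (w : ℂ → ℂ)
    (hw : w = fun z => -(1 / (2 * a * (z - c0))) - 1 / (2 * a * (z - c1))) :
    ∀ z : ℂ, z ≠ c0 → z ≠ c1 →
      deriv (deriv w) z - 6 * a * w z * deriv w z + 4 * a ^ 2 * (w z) ^ 3 = 0 :=
  stmt_6_general a c0 c1 w hw
end

section
/- Let K ∈ ℂ and let v : U → ℂ be twice differentiable on a connected open set U ⊆ ℂ with v(z) ≠ 0 on U. If 4 v(z) v''(z) − 5 v'(z)² − K·v(z)³ = 0 on U, then the function z ↦ (v'(z)² − K·v(z)³)² / v(z)⁵ is constant on U. -/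
/-!
Writing `A = v'² - K v³`, the quotient rule gives
`(A² / v⁵)' = A v' (4 v v'' - 5 v'² - K v³) / v⁶`,
so `A² / v⁵` has zero derivative wherever `v` solves the equation, and is therefore constant
on a connected open set.
-/

theorem hasDerivAt_sq_sub_mul_pow_three_sq_div_pow_five {𝕜 : Type*} [NontriviallyNormedField 𝕜]
    (K : 𝕜) {v : 𝕜 → 𝕜} {z : 𝕜} (hv : DifferentiableAt 𝕜 v z)
    (hv' : DifferentiableAt 𝕜 (deriv v) z) (hvz : v z ≠ 0) :
    HasDerivAt (fun z => (deriv v z ^ 2 - K * v z ^ 3) ^ 2 / v z ^ 5)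
      ((deriv v z ^ 2 - K * v z ^ 3) * deriv v z *
          (4 * v z * deriv (deriv v) z - 5 * deriv v z ^ 2 - K * v z ^ 3) / v z ^ 6) z := by
  have hA := (hv'.hasDerivAt.fun_pow 2).fun_sub ((hv.hasDerivAt.fun_pow 3).const_mul K)
  refine ((hA.fun_pow 2).div (hv.hasDerivAt.fun_pow 5) (pow_ne_zero 5 hvz)).congr_deriv ?_
  field_simp
  ring

/-- first integral of `4 v v'' - 5 (v')² - K v³ = 0`. -/
theorem stmt_12 (K : ℂ) (U : Set ℂ) (hU : IsOpen U) (hUconn : IsPreconnected U)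
    (v : ℂ → ℂ)
    (hv : ∀ z ∈ U, DifferentiableAt ℂ v z)
    (hv' : ∀ z ∈ U, DifferentiableAt ℂ (deriv v) z)
    (hvne : ∀ z ∈ U, v z ≠ 0)
    (heq : ∀ z ∈ U, 4 * v z * deriv (deriv v) z - 5 * (deriv v z) ^ 2
        - K * (v z) ^ 3 = 0) :
    ∃ C : ℂ, ∀ z ∈ U,
      ((deriv v z) ^ 2 - K * (v z) ^ 3) ^ 2 / (v z) ^ 5 = C := by
  have hderiv z (hz : z ∈ U) :=
    hasDerivAt_sq_sub_mul_pow_three_sq_div_pow_five K (hv z hz) (hv' z hz) (hvne z hz)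
  refine hU.exists_is_const_of_deriv_eq_zero hUconn
    (fun z hz => (hderiv z hz).differentiableAt.differentiableWithinAt) fun z hz => ?_
  rw [(hderiv z hz).deriv, heq z hz, mul_zero, zero_div, Pi.zero_apply]
end

section
/- The set of pairs (x, y) of nonzero integers satisfying 2/x + 2/y = 1 (equivalently 2y + 2x = xy) is exactly {(3, 6), (6, 3), (4, 4), (1, −2), (−2, 1)}. -/
/-! Clearing denominators turns `2/x + 2/y = 1` into `(x - 2)(y - 2) = 4`, so `(x - 2, y - 2)`
runs over the six factorisations of `4`; the factorisation `(-2) * (-2)` gives `x = y = 0`, which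
is excluded. -/

theorem div_add_div_eq_one_iff_sub_mul_sub_eq_sq {K : Type*} [Field K] {a x y : K}
    (hx : x ≠ 0) (hy : y ≠ 0) : a / x + a / y = 1 ↔ (x - a) * (y - a) = a ^ 2 := by
  rw [div_add_div _ _ hx hy, div_eq_one_iff_eq (mul_ne_zero hx hy)]
  constructor <;> intro h <;> linear_combination -h

theorem Int.ne_zero_and_ne_zero_and_sub_two_mul_sub_two_eq_four_iff {x y : ℤ} :
    x ≠ 0 ∧ y ≠ 0 ∧ (x - 2) * (y - 2) = 4 ↔
      (x, y) ∈ ({(3, 6), (6, 3), (4, 4), (1, -2), (-2, 1)} : Set (ℤ × ℤ)) := by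
  rw [← Int.prodMk_mem_divisorsAntidiag four_ne_zero, Int.divisorsAntidiagonal_four]
  simp only [Finset.mem_insert, Finset.mem_singleton, Set.mem_insert_iff, Set.mem_singleton_iff,
    Prod.mk.injEq]
  omega

/-- the nonzero integer solutions of `2/x + 2/y = 1` are exactly
`(3,6), (6,3), (4,4), (1,-2), (-2,1)`. -/
theorem stmt_13 :
    {p : ℤ × ℤ | p.1 ≠ 0 ∧ p.2 ≠ 0 ∧ (2 : ℚ) / (p.1 : ℚ) + 2 / (p.2 : ℚ) = 1}
      = {(3, 6), (6, 3), (4, 4), (1, -2), (-2, 1)} := by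
  ext ⟨x, y⟩
  rw [← Int.ne_zero_and_ne_zero_and_sub_two_mul_sub_two_eq_four_iff]
  refine and_congr_right fun hx => and_congr_right fun hy => ?_
  rw [div_add_div_eq_one_iff_sub_mul_sub_eq_sq (by exact_mod_cast hx) (by exact_mod_cast hy)]
  norm_cast
end

section
/- Let k ∈ ℂ, k ≠ 0, c ∈ ℂ, d ∈ ℂ. Define v(ζ) = −2c²/(k·(cosh(√2·c·ζ + d) + 1)) for all ζ with cosh(√2·c·ζ + d) + 1 ≠ 0. Then v'(ζ)² = 2k·v(ζ)³ + 2c²·v(ζ)² at every such ζ. Consequently v also satisfies the second-order equation k v³ − v v'' + (v')² = 0. -/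
/-!
With `g z = 1 / (cosh z + 1)` one has `g' = -sinh · g²`, and `sinh² = cosh² - 1` turns this into
the autonomous equations `g'² = g² - 2 g³` and `g'' = g - 3 g²`. Writing `s² = 2c²`, the function
`v` is `-(s²/k) · g(s ζ + d)`, and the affine change of variable scales these into
`v'² = 2k v³ + s² v²` and `v'' = s² v + 3k v²`; eliminating `s² v²` between them gives
`k v³ - v v'' + v'² = 0`.
-/

open Complex Filter Topology

section Affine

variable {𝕜 : Type*} [NontriviallyNormedField 𝕜] {f f' f'' : 𝕜 → 𝕜}

theorem HasDerivAt.const_mul_comp_affine {x f'x : 𝕜} {s d : 𝕜}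
    (h : HasDerivAt f f'x (s * x + d)) (a : 𝕜) :
    HasDerivAt (fun y => a * f (s * y + d)) (a * s * f'x) x := by
  have affine : HasDerivAt (fun y => s * y + d) s x := by
    simpa using ((hasDerivAt_id x).const_mul s).add_const d
  simpa [mul_assoc, mul_comm s] using (h.comp x affine).const_mul a

theorem deriv_deriv_const_mul_comp_affine {U : Set 𝕜} (hU : IsOpen U)
    (hf : ∀ z ∈ U, HasDerivAt f (f' z) z) (hf' : ∀ z ∈ U, HasDerivAt f' (f'' z) z)
    (a s d : 𝕜) {x : 𝕜} (hx : s * x + d ∈ U) :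
    deriv (deriv fun y => a * f (s * y + d)) x = a * s ^ 2 * f'' (s * x + d) := by
  have hderiv : deriv (fun y => a * f (s * y + d)) =ᶠ[𝓝 x] fun y => a * s * f' (s * y + d) := by
    filter_upwards [(hU.preimage (f := fun y => s * y + d) (by fun_prop)).mem_nhds hx] with y hy
    exact ((hf (s * y + d) hy).const_mul_comp_affine a).deriv
  rw [hderiv.deriv_eq, ((hf' _ hx).const_mul_comp_affine (a * s)).deriv]
  ring

end Affine

noncomputable def invCoshAddOne (z : ℂ) : ℂ := (cosh z + 1)⁻¹

theorem isOpen_cosh_add_one_ne_zero : IsOpen {z : ℂ | cosh z + 1 ≠ 0} :=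
  isOpen_ne_fun (by fun_prop) continuous_const

theorem hasDerivAt_invCoshAddOne {z : ℂ} (hz : cosh z + 1 ≠ 0) :
    HasDerivAt invCoshAddOne (-sinh z * invCoshAddOne z ^ 2) z := by
  have h : HasDerivAt invCoshAddOne _ z := ((hasDerivAt_cosh z).add_const 1).inv hz
  convert h using 1
  rw [invCoshAddOne]
  field_simp

theorem sinh_sq_mul_invCoshAddOne_pow_four {z : ℂ} (hz : cosh z + 1 ≠ 0) :
    sinh z ^ 2 * invCoshAddOne z ^ 4 = invCoshAddOne z ^ 2 - 2 * invCoshAddOne z ^ 3 := by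
  rw [invCoshAddOne]
  field_simp
  linear_combination -cosh_sq_sub_sinh_sq z

theorem hasDerivAt_neg_sinh_mul_invCoshAddOne_sq {z : ℂ} (hz : cosh z + 1 ≠ 0) :
    HasDerivAt (fun z => -sinh z * invCoshAddOne z ^ 2)
      (invCoshAddOne z - 3 * invCoshAddOne z ^ 2) z := by
  refine ((hasDerivAt_sinh z).fun_neg.fun_mul
    ((hasDerivAt_invCoshAddOne hz).fun_pow 2)).congr_deriv ?_
  norm_num [invCoshAddOne]
  field_simp
  linear_combination (-2) * cosh_sq_sub_sinh_sq z

noncomputable def coshWave (k s d ζ : ℂ) : ℂ := -(s ^ 2 / k) * invCoshAddOne (s * ζ + d)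

section CoshWave

variable {k s d ζ : ℂ}

theorem deriv_coshWave (hζ : cosh (s * ζ + d) + 1 ≠ 0) :
    deriv (coshWave k s d) ζ =
      -(s ^ 2 / k) * s * (-sinh (s * ζ + d) * invCoshAddOne (s * ζ + d) ^ 2) :=
  ((hasDerivAt_invCoshAddOne hζ).const_mul_comp_affine _).deriv

theorem deriv_coshWave_sq (hk : k ≠ 0) (hζ : cosh (s * ζ + d) + 1 ≠ 0) :
    deriv (coshWave k s d) ζ ^ 2 =
      2 * k * coshWave k s d ζ ^ 3 + s ^ 2 * coshWave k s d ζ ^ 2 := by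
  rw [deriv_coshWave hζ, coshWave]
  field_simp
  linear_combination s ^ 6 * sinh_sq_mul_invCoshAddOne_pow_four hζ

theorem deriv_deriv_coshWave (hk : k ≠ 0) (hζ : cosh (s * ζ + d) + 1 ≠ 0) :
    deriv (deriv (coshWave k s d)) ζ =
      s ^ 2 * coshWave k s d ζ + 3 * k * coshWave k s d ζ ^ 2 := by
  change deriv (deriv fun y => -(s ^ 2 / k) * invCoshAddOne (s * y + d)) ζ = _
  rw [deriv_deriv_const_mul_comp_affine isOpen_cosh_add_one_ne_zero
    (fun _ => hasDerivAt_invCoshAddOne) (fun _ => hasDerivAt_neg_sinh_mul_invCoshAddOne_sq)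
    _ _ _ hζ, coshWave]
  field_simp
  ring

end CoshWave

theorem stmt_14_general (k c d s : ℂ) (hk : k ≠ 0) (hs : s ^ 2 = 2 * c ^ 2)
    (v : ℂ → ℂ)
    (hv : v = fun ζ => -(2 * c ^ 2) / (k * (Complex.cosh (s * ζ + d) + 1))) :
    ∀ ζ : ℂ, Complex.cosh (s * ζ + d) + 1 ≠ 0 →
      (deriv v ζ) ^ 2 = 2 * k * (v ζ) ^ 3 + 2 * c ^ 2 * (v ζ) ^ 2 ∧
      k * (v ζ) ^ 3 - v ζ * deriv (deriv v) ζ + (deriv v ζ) ^ 2 = 0 := by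
  intro ζ hζ
  have hv_eq : v = coshWave k s d := by
    rw [hv, ← hs]
    funext ζ
    rw [coshWave, invCoshAddOne, div_eq_mul_inv, mul_inv]
    ring
  have first_order := deriv_coshWave_sq hk hζ
  rw [hv_eq, ← hs]
  refine ⟨first_order, ?_⟩
  rw [deriv_deriv_coshWave hk hζ]
  linear_combination first_order

/-- the cosh-type function
`v(ζ) = -2c²/(k(cosh(√2 c ζ + d) + 1))` satisfies `(v')² = 2k v³ + 2c² v²`
and hence `k v³ - v v'' + (v')² = 0`. Here `s` is a fixed square root of `2c²`. -/
theorem stmt_14 (k c d s : ℂ) (hk : k ≠ 0) (hc : c ≠ 0) (hs : s ^ 2 = 2 * c ^ 2)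
    (v : ℂ → ℂ)
    (hv : v = fun ζ => -(2 * c ^ 2) / (k * (Complex.cosh (s * ζ + d) + 1))) :
    ∀ ζ : ℂ, Complex.cosh (s * ζ + d) + 1 ≠ 0 →
      (deriv v ζ) ^ 2 = 2 * k * (v ζ) ^ 3 + 2 * c ^ 2 * (v ζ) ^ 2 ∧
      k * (v ζ) ^ 3 - v ζ * deriv (deriv v) ζ + (deriv v ζ) ^ 2 = 0 :=
  stmt_14_general k c d s hk hs v hv
end

section
/- Let c ∈ ℂ, c ≠ 0, and d ∈ ℂ. The function f(z) = c·cot(d − cz/2) satisfies f''(z) = f(z)·f'(z) at every z where sin(d − cz/2) ≠ 0. Consequently, for a_2 ≠ 0 and b_2 ∈ ℂ, the function u(z) = (c·cot(d − cz/2) − b_2)/a_2 satisfies u'' − (a_2 u + b_2)u' = 0, which is the expansion of the factorized equation [D − (a_2 u + b_2)][D](u − α) = 0 in the case a_1 = b_1 = 0. -/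
/-!
With `f = c·cot(d - cz/2)` and `cot' = -(1 + cot²)`, the chain rule gives the Riccati equation
`f' = (f² + c²)/2`. Differentiating it once more, `f'' = f·f'`. The equation for `u` is the
affine change of variables `f = a₂ u + b₂` applied to this identity.
-/

open Complex Filter Topology

theorem hasDerivAt_cos_div_sin {z : ℂ} (hz : sin z ≠ 0) :
    HasDerivAt (fun z => cos z / sin z) (-(1 + (cos z / sin z) ^ 2)) z := by
  refine ((hasDerivAt_cos z).div (hasDerivAt_sin z) hz).congr_deriv ?_
  field_simp
  ring

theorem hasDerivAt_mul_cot_affine (c d : ℂ) {z : ℂ} (hz : sin (d - c * z / 2) ≠ 0) :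
    HasDerivAt (fun z => c * (cos (d - c * z / 2) / sin (d - c * z / 2)))
      (((c * (cos (d - c * z / 2) / sin (d - c * z / 2))) ^ 2 + c ^ 2) / 2) z := by
  have hlin : HasDerivAt (fun z => d - c * z / 2) (-(c / 2)) z := by
    simpa using (((hasDerivAt_id z).const_mul c).div_const 2).const_sub d
  refine (((hasDerivAt_cos_div_sin hz).comp z hlin).const_mul c).congr_deriv ?_
  ring

theorem hasDerivAt_deriv_of_eventually_hasDerivAt_comp {𝕜 : Type*} [NontriviallyNormedField 𝕜]
    {f g : 𝕜 → 𝕜} {g' z : 𝕜} (hf : ∀ᶠ w in 𝓝 z, HasDerivAt f (g (f w)) w)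
    (hg : HasDerivAt g g' (f z)) :
    HasDerivAt (deriv f) (g' * g (f z)) z :=
  (hg.comp z hf.self_of_nhds).congr_of_eventuallyEq (hf.mono fun _ hw => hw.deriv)

theorem deriv_deriv_sub_div_const_of_deriv_deriv_eq_mul {𝕜 : Type*} [NontriviallyNormedField 𝕜] {f : 𝕜 → 𝕜}
    {a b z : 𝕜} (ha : a ≠ 0) (hf : deriv (deriv f) z = f z * deriv f z) :
    deriv (deriv fun w => (f w - b) / a) z
      = (a * ((f z - b) / a) + b) * deriv (fun w => (f w - b) / a) z := by
  have hu : deriv (fun w => (f w - b) / a) = fun w => deriv f w / a := by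
    funext w
    rw [deriv_div_const, deriv_sub_const]
  rw [hu, deriv_div_const, hf]
  field_simp
  ring

theorem stmt_15_general (c d : ℂ) (a2 b2 : ℂ) (ha2 : a2 ≠ 0)
    (f u : ℂ → ℂ)
    (hf : f = fun z => c * (Complex.cos (d - c * z / 2) / Complex.sin (d - c * z / 2)))
    (hu : u = fun z => (f z - b2) / a2) :
    ∀ z : ℂ, Complex.sin (d - c * z / 2) ≠ 0 →
      deriv (deriv f) z = f z * deriv f z ∧
      deriv (deriv u) z - (a2 * u z + b2) * deriv u z = 0 := by
  intro z hz
  have hriccati : ∀ᶠ w in 𝓝 z, HasDerivAt f ((f w ^ 2 + c ^ 2) / 2) w := by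
    have hsin : ContinuousAt (fun w => sin (d - c * w / 2)) z := by fun_prop
    filter_upwards [hsin.eventually_ne hz] with w hw
    subst hf
    exact hasDerivAt_mul_cot_affine c d hw
  have hsq : HasDerivAt (fun y => (y ^ 2 + c ^ 2) / 2) (f z) (f z) := by
    simpa using ((hasDerivAt_pow 2 (f z)).add_const (c ^ 2)).div_const 2
  have hf'' : deriv (deriv f) z = f z * deriv f z := by
    rw [(hasDerivAt_deriv_of_eventually_hasDerivAt_comp hriccati hsq).deriv,
      hriccati.self_of_nhds.deriv]
  subst hu
  exact ⟨hf'', sub_eq_zero.mpr (deriv_deriv_sub_div_const_of_deriv_deriv_eq_mul ha2 hf'')⟩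

/-- `f(z) = c·cot(d - cz/2)` satisfies `f'' = f f'`, and
`u = (f - b₂)/a₂` satisfies `u'' - (a₂ u + b₂) u' = 0`. -/
theorem stmt_15 (c d : ℂ) (hc : c ≠ 0) (a2 b2 : ℂ) (ha2 : a2 ≠ 0)
    (f u : ℂ → ℂ)
    (hf : f = fun z => c * (Complex.cos (d - c * z / 2) / Complex.sin (d - c * z / 2)))
    (hu : u = fun z => (f z - b2) / a2) :
    ∀ z : ℂ, Complex.sin (d - c * z / 2) ≠ 0 →
      deriv (deriv f) z = f z * deriv f z ∧
      deriv (deriv u) z - (a2 * u z + b2) * deriv u z = 0 :=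
  stmt_15_general c d a2 b2 ha2 f u hf hu
end

section
/- Let λ, e_1, e_2, g_3 ∈ ℂ with λ ≠ 0, and let c ∈ ℂ satisfy c²λ = 25(e_1 − e_2) ≠ 0. Let W be twice differentiable on an open set V ⊆ ℂ with W''(ζ) = 6W(ζ)² + (g_3·0 + 0) (i.e. W'' = 6W², the Weierstrass equation with g_2 = 0). Define h(z) = (e_1 − e_2)·e^{−2cz/5}·W(e^{−cz/5} − ζ_0) + e_2 on the open set U = {z : e^{−cz/5} − ζ_0 ∈ V}, where ζ_0 ∈ ℂ is fixed. Then h''(z) + c·h'(z) − (6/λ)(h(z) − e_1)(h(z) − e_2) = 0 for all z ∈ U. -/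
/-!
With `ζ = e^{kz}`, `k = -c/5`, the function `h` is `e₂ + (e₁ - e₂) y` where `y = ζ² W(ζ - ζ₀)`.
Since `ζ' = kζ`, the chain rule gives `y'' - 5k y' = k² (ζ⁴ W'' - 6 ζ² W)`, which equals
`6k² (y² - y)` once `W'' = 6W²`; the condition `c²λ = 25(e₁ - e₂)` is exactly what turns this
into the travelling-wave equation for `h`.
-/

open Complex

noncomputable def expSubst (k ζ₀ : ℂ) (W : ℂ → ℂ) (z : ℂ) : ℂ :=
  exp (k * z) ^ 2 * W (exp (k * z) - ζ₀)

section

variable {k ζ₀ z : ℂ} {f : ℂ → ℂ}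

theorem hasDerivAt_exp_pow_mul_comp (n : ℕ) (hf : DifferentiableAt ℂ f (exp (k * z) - ζ₀)) :
    HasDerivAt (fun z => exp (k * z) ^ n * f (exp (k * z) - ζ₀))
      (k * (n * exp (k * z) ^ n * f (exp (k * z) - ζ₀)
        + exp (k * z) ^ (n + 1) * deriv f (exp (k * z) - ζ₀))) z := by
  have hexp : HasDerivAt (fun z => exp (k * z)) (exp (k * z) * k) z := by
    simpa using ((hasDerivAt_id z).const_mul k).cexp
  have hcomp := hf.hasDerivAt.comp z (hexp.sub_const ζ₀)
  refine ((hexp.fun_pow n).mul hcomp).congr_deriv ?_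
  rcases n with _ | n
  · simp only [Function.comp_apply]
    ring
  · simp only [Nat.add_sub_cancel, Function.comp_apply]
    push_cast
    ring

theorem isOpen_exp_mul_sub_preimage {V : Set ℂ} (hV : IsOpen V) :
    IsOpen {z : ℂ | exp (k * z) - ζ₀ ∈ V} :=
  hV.preimage (by fun_prop)

variable {V : Set ℂ} {W : ℂ → ℂ}

theorem deriv_expSubst (hW : ∀ ζ ∈ V, DifferentiableAt ℂ W ζ) (hz : exp (k * z) - ζ₀ ∈ V) :
    deriv (expSubst k ζ₀ W) z =
      k * (2 * expSubst k ζ₀ W z + exp (k * z) ^ 3 * deriv W (exp (k * z) - ζ₀)) :=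
  (hasDerivAt_exp_pow_mul_comp 2 (hW _ hz)).deriv.trans (by rw [expSubst]; push_cast; ring)

theorem deriv_deriv_expSubst_sub (hV : IsOpen V) (hW : ∀ ζ ∈ V, DifferentiableAt ℂ W ζ)
    (hW' : ∀ ζ ∈ V, DifferentiableAt ℂ (deriv W) ζ)
    (hWeq : ∀ ζ ∈ V, deriv (deriv W) ζ = 6 * W ζ ^ 2) (hz : exp (k * z) - ζ₀ ∈ V) :
    deriv (deriv (expSubst k ζ₀ W)) z - 5 * k * deriv (expSubst k ζ₀ W) z =
      6 * k ^ 2 * (expSubst k ζ₀ W z ^ 2 - expSubst k ζ₀ W z) := by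
  have hderiv : deriv (expSubst k ζ₀ W) =ᶠ[nhds z] fun z =>
      k * (2 * expSubst k ζ₀ W z + exp (k * z) ^ 3 * deriv W (exp (k * z) - ζ₀)) :=
    Filter.eventually_of_mem ((isOpen_exp_mul_sub_preimage hV).mem_nhds hz)
      fun w hw => deriv_expSubst hW hw
  have h2 := hasDerivAt_exp_pow_mul_comp 2 (hW _ hz)
  have h3 := hasDerivAt_exp_pow_mul_comp 3 (hW' _ hz)
  have hsecond : HasDerivAt (fun z =>
      k * (2 * expSubst k ζ₀ W z + exp (k * z) ^ 3 * deriv W (exp (k * z) - ζ₀))) _ z :=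
    ((h2.const_mul 2).add h3).const_mul k
  rw [hderiv.deriv_eq, hsecond.deriv, deriv_expSubst hW hz, hWeq _ hz, expSubst]
  push_cast
  ring

end

theorem stmt_17_general (lam e1 e2 c ζ0 : ℂ) (hlam : lam ≠ 0)
    (hc : c ^ 2 * lam = 25 * (e1 - e2))
    (V : Set ℂ) (hV : IsOpen V) (W : ℂ → ℂ)
    (hW : ∀ ζ ∈ V, DifferentiableAt ℂ W ζ)
    (hW' : ∀ ζ ∈ V, DifferentiableAt ℂ (deriv W) ζ)
    (hWeq : ∀ ζ ∈ V, deriv (deriv W) ζ = 6 * (W ζ) ^ 2)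
    (h : ℂ → ℂ)
    (hh : h = fun z => (e1 - e2) * Complex.exp (-2 * c * z / 5) *
      W (Complex.exp (-c * z / 5) - ζ0) + e2) :
    ∀ z ∈ {z : ℂ | Complex.exp (-c * z / 5) - ζ0 ∈ V},
      deriv (deriv h) z + c * deriv h z
        - (6 / lam) * (h z - e1) * (h z - e2) = 0 := by
  set y := expSubst (-c / 5) ζ0 W
  have hh_y : h = fun z => (e1 - e2) * y z + e2 := by
    ext z
    simp only [hh, y, expSubst, div_mul_eq_mul_div, ← exp_nat_mul]
    ring_nf
  intro z hz
  have hz' : exp (-c / 5 * z) - ζ0 ∈ V := by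
    rwa [div_mul_eq_mul_div]
  have hy := deriv_deriv_expSubst_sub hV hW hW' hWeq hz'
  have hderiv : deriv h = fun z => (e1 - e2) * deriv y z := by
    ext z
    rw [hh_y, deriv_add_const, deriv_const_mul_field']
  rw [hderiv, deriv_const_mul_field', hh_y]
  field_simp
  linear_combination (e1 - e2) * lam * hy + 6 * (e1 - e2) * (y z ^ 2 - y z) / 25 * hc

/-- under the Ablowitz–Zeppetella condition `c²λ = 25(e₁ - e₂) ≠ 0`,
`h(z) = (e₁-e₂) e^{-2cz/5} W(e^{-cz/5} - ζ₀) + e₂` with `W'' = 6W²` solves the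
travelling-wave Fisher equation `h'' + c h' - (6/λ)(h - e₁)(h - e₂) = 0`. -/
theorem stmt_17 (lam e1 e2 c ζ0 : ℂ) (hlam : lam ≠ 0)
    (hc : c ^ 2 * lam = 25 * (e1 - e2)) (hne : e1 ≠ e2)
    (V : Set ℂ) (hV : IsOpen V) (W : ℂ → ℂ)
    (hW : ∀ ζ ∈ V, DifferentiableAt ℂ W ζ)
    (hW' : ∀ ζ ∈ V, DifferentiableAt ℂ (deriv W) ζ)
    (hWeq : ∀ ζ ∈ V, deriv (deriv W) ζ = 6 * (W ζ) ^ 2)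
    (h : ℂ → ℂ)
    (hh : h = fun z => (e1 - e2) * Complex.exp (-2 * c * z / 5) *
      W (Complex.exp (-c * z / 5) - ζ0) + e2) :
    ∀ z ∈ {z : ℂ | Complex.exp (-c * z / 5) - ζ0 ∈ V},
      deriv (deriv h) z + c * deriv h z
        - (6 / lam) * (h z - e1) * (h z - e2) = 0 :=
  stmt_17_general lam e1 e2 c ζ0 hlam hc V hV W hW hW' hWeq h hh
end

section
/- Let a_1, a_2, b_1, α ∈ ℂ with a_2 ≠ 0 and α a_1 + b_1 ≠ 0, and set b_2 = 2α a_1 − α a_2 + 2 b_1. Fix z_0 ∈ ℂ. Then the function u(z) = (−2α a_1 + α a_2 − 2 b_1)/a_2 − 2(α a_1 + b_1)/(a_2·(e^{(z − z_0)(α a_1 + b_1)} − 1)) satisfies u'' + u'·(α a_1 − (2a_1 + a_2)u − b_1 − b_2) + (u − α)(a_1 u + b_1)(a_2 u + b_2) = 0 at every z where e^{(z − z_0)(α a_1 + b_1)} ≠ 1. -/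
/-!
With `c = α a₁ + b₁`, the function is `u = β - γ / (e^{(z - z₀) c} - 1)` where `γ = 2c / a₂` and
`β = α - γ`. Such a Möbius image of an exponential solves the autonomous Riccati equation
`u' = (c / γ) (u - β) (u - β - γ) = (a₂ / 2) (u - α + γ) (u - α)`, and then `u'' = f'(u) f(u)` for
the right-hand side `f`. Substituting both into the ODE leaves a polynomial identity in `u`; it holds
because `b₂ = 2c - α a₂` is exactly the value for which the first-order factor
`(u - α)' - (a₁ u + b₁)(u - α) = (a₂ / 2 - a₁)(u - α)²` is annihilated by `D - (a₂ u + b₂)`.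
-/

open Complex Filter Topology

section Autonomous

variable {𝕜 : Type*} [NontriviallyNormedField 𝕜]

theorem deriv_deriv_of_eventually_hasDerivAt_comp {u f : 𝕜 → 𝕜} {f' z : 𝕜}
    (hu : ∀ᶠ w in 𝓝 z, HasDerivAt u (f (u w)) w) (hf : HasDerivAt f f' (u z)) :
    deriv (deriv u) z = f' * f (u z) := by
  have hderiv : deriv u =ᶠ[𝓝 z] f ∘ u := hu.mono fun w hw => hw.deriv
  rw [hderiv.deriv_eq]
  exact (hf.comp z hu.self_of_nhds).deriv

theorem hasDerivAt_mul_sub_mul_sub (k p q x : 𝕜) :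
    HasDerivAt (fun x => k * (x - p) * (x - q)) (k * ((x - q) + (x - p))) x := by
  refine ((((hasDerivAt_id' x).sub_const p).const_mul k).mul
    ((hasDerivAt_id' x).sub_const q)).congr_deriv ?_
  ring

end Autonomous

theorem hasDerivAt_sub_div_exp_sub_one (β γ c z0 z : ℂ) (hγ : γ ≠ 0)
    (hz : exp ((z - z0) * c) ≠ 1) :
    HasDerivAt (fun z => β - γ / (exp ((z - z0) * c) - 1))
      (c / γ * (β - γ / (exp ((z - z0) * c) - 1) - β)
        * (β - γ / (exp ((z - z0) * c) - 1) - (β + γ))) z := by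
  have hexp : HasDerivAt (fun z => exp ((z - z0) * c)) (exp ((z - z0) * c) * c) z := by
    simpa using (((hasDerivAt_id z).sub_const z0).mul_const c).cexp
  have hne : exp ((z - z0) * c) - 1 ≠ 0 := sub_ne_zero.mpr hz
  refine (((hasDerivAt_const z γ).div (hexp.sub_const 1) hne).const_sub β).congr_deriv ?_
  generalize exp ((z - z0) * c) = e at hne ⊢
  field_simp
  ring

/-- the explicit exponential solution of Subcase B2 of the
factorized second-order ODE. -/
theorem stmt_19 (a1 a2 b1 α z0 : ℂ) (ha2 : a2 ≠ 0) (hne : α * a1 + b1 ≠ 0)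
    (b2 : ℂ) (hb2 : b2 = 2 * α * a1 - α * a2 + 2 * b1)
    (u : ℂ → ℂ)
    (hu : u = fun z => (-2 * α * a1 + α * a2 - 2 * b1) / a2 -
      2 * (α * a1 + b1) / (a2 * (Complex.exp ((z - z0) * (α * a1 + b1)) - 1))) :
    ∀ z : ℂ, Complex.exp ((z - z0) * (α * a1 + b1)) ≠ 1 →
      deriv (deriv u) z
        + deriv u z * (α * a1 - (2 * a1 + a2) * u z - b1 - b2)
        + (u z - α) * (a1 * u z + b1) * (a2 * u z + b2) = 0 := by
  intro z hz
  set c := α * a1 + b1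
  set β := (-2 * α * a1 + α * a2 - 2 * b1) / a2
  set γ := 2 * c / a2
  have hγ : γ ≠ 0 := div_ne_zero (mul_ne_zero two_ne_zero hne) ha2
  have hcγ : c / γ = a2 / 2 := by
    simp only [γ]
    field_simp
  have hβγ : β + γ = α := by
    simp only [β, γ, c]
    field_simp
    ring
  have hβ : β = α - γ := eq_sub_of_add_eq hβγ
  have hu' : u = fun z => β - γ / (exp ((z - z0) * c) - 1) := by
    simp only [hu, γ, div_mul_eq_div_div]
  have hopen : IsOpen {w : ℂ | exp ((w - z0) * c) ≠ 1} :=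
    isOpen_compl_singleton.preimage (by fun_prop)
  have hriccati : ∀ᶠ w in 𝓝 z, HasDerivAt u (c / γ * (u w - β) * (u w - (β + γ))) w :=
    Filter.mem_of_superset (hopen.mem_nhds hz) fun w hw => by
      rw [hu']
      exact hasDerivAt_sub_div_exp_sub_one β γ c z0 w hγ hw
  rw [deriv_deriv_of_eventually_hasDerivAt_comp hriccati
      (hasDerivAt_mul_sub_mul_sub (c / γ) β (β + γ) (u z)),
    hriccati.self_of_nhds.deriv, hb2, hcγ, hβγ, hβ]
  simp only [γ, c]
  field_simp
  ring
end
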